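/- Every three-valued answer set M of an LPOD P is a ⪯-minimal three-valued model of P, where ⪯ is the pointwise extension of the three-valued ordering with F ≺ T and F ≺ F*. -/

import Mathlib

/-! Four truth values F < F* < T* < T. -/
inductive V4 : Type
  | F | Fs | Ts | T
  deriving DecidableEq, Repr

instance : Fintype V4 where
  elems := {V4.F, V4.Fs, V4.Ts, V4.T}
  complete x := by cases x <;> simp

namespace V4

def toNat : V4 → ℕ
  | F => 0
  | Fs => 1
  | Ts => 2
  | T => 3

theorem toNat_injective : Function.Injective toNat := by
  intro a b h
  cases a <;> cases b <;> simp_all [toNat]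

instance : LinearOrder V4 := LinearOrder.lift' toNat toNat_injective

instance : BoundedOrder V4 where
  top := T
  le_top a := by cases a <;> decide
  bot := F
  bot_le a := by cases a <;> decide

/-- Negation-as-failure: `not φ` is `T` if `φ ≤ F*`, else `F`. -/
def notv (a : V4) : V4 := if a ≤ Fs then T else F

/-- Ordered disjunction on truth values: `u × v = v` if `u = F*`, else `u`. -/
def times (a b : V4) : V4 := if a = Fs then b else a

end V4

variable {α : Type}

/-- A ground literal: an atom together with a polarity (`true` = the atom itself,
`false` = its strong negation). -/
structure Lit (α : Type) where
  atom : α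
  positive : Bool
  deriving DecidableEq

/-- A (four-valued) interpretation assigns a truth value to every literal.
Three-valued interpretations are the `solid` ones (no `T*` value). -/
abbrev Interp (α : Type) := Lit α → V4

/-- `I` is solid (equivalently, three-valued) if it assigns `T*` to no literal. -/
def solid (I : Interp α) : Prop := ∀ l, I l ≠ V4.Ts

/-- `I` is consistent: no atom has both the atom and its strong negation `T`. -/
def consistentI (I : Interp α) : Prop :=
  ∀ a : α, ¬ (I ⟨a, true⟩ = V4.T ∧ I ⟨a, false⟩ = V4.T)

/-- `I` takes values only in `{F, T}`. -/
def twoValued (I : Interp α) : Prop := ∀ l, I l = V4.F ∨ I l = V4.T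

/-- Value of the conjunction of a list of literals. -/
def evalConj (I : Interp α) (L : List (Lit α)) : V4 := (L.map I).foldr min V4.T

/-- Value of the conjunction `not B1 ∧ ⋯ ∧ not Bk`. -/
def evalNegs (I : Interp α) (L : List (Lit α)) : V4 :=
  (L.map (fun b => V4.notv (I b))).foldr min V4.T

/-- Value of the disjunction of a list of literals. -/
def evalDisj (I : Interp α) (L : List (Lit α)) : V4 := (L.map I).foldr max V4.F

/-- Value of an ordered disjunction of the given (nonempty) list of values.
(`F*` is a right identity for `×`, so the fold computes `v1 × ⋯ × vn`.) -/
def evalOD (vs : List V4) : V4 := vs.foldr V4.times V4.Fs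

/-- Pointwise `≤` on interpretations. -/
def interpLE (I J : Interp α) : Prop := ∀ l, I l ≤ J l

/-- The four-valued relation `⪯`: `u ⪯ v` iff `u = v` or `u ≺ v`, where
`F ≺ F*`, `F ≺ T*`, `F ≺ T` and `T* ≺ T`.  On three-valued (solid)
interpretations it restricts to the ordering generated by `F ≺ F*`, `F ≺ T`. -/
def preceq (u v : V4) : Prop :=
  u = v ∨ (u = V4.F ∧ v ≠ V4.F) ∨ (u = V4.Ts ∧ v = V4.T)

/-- Pointwise `⪯` on interpretations. -/
def interpPreceq (I J : Interp α) : Prop := ∀ l, preceq (I l) (J l)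

/-- The set of literals that are `T` in `I`. -/
def collapse (I : Interp α) : Set (Lit α) := { l | I l = V4.T }

/-! ### LPOD rules -/

/-- An LPOD rule `C1 × ⋯ × Cn ← A1,…,Am, not B1,…,not Bk` with head
`c1 :: cs` (so the head is nonempty). -/
structure Rule (α : Type) where
  c1 : Lit α
  cs : List (Lit α)
  pos : List (Lit α)
  neg : List (Lit α)

def Rule.headList (R : Rule α) : List (Lit α) := R.c1 :: R.cs

def Rule.headVal (R : Rule α) (I : Interp α) : V4 := evalOD (R.headList.map I)

def Rule.bodyVal (R : Rule α) (I : Interp α) : V4 :=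
  min (evalConj I R.pos) (evalNegs I R.neg)

/-- `I` satisfies the rule `R` (the rule evaluates to `T`). -/
def ruleSat (I : Interp α) (R : Rule α) : Prop := R.bodyVal I ≤ R.headVal I

/-- `I` is a model of the LPOD `P`. -/
def isModel (I : Interp α) (P : Set (Rule α)) : Prop := ∀ R ∈ P, ruleSat I R

/-! ### The ×-reduct of an LPOD -/

/-- A reduct rule `C ← [F*,] A1,…,Am`; `fstar` records whether the constant `F*`
occurs in the body. -/
structure RedRule (α : Type) where
  head : Lit α
  pos : List (Lit α)
  fstar : Bool

def RedRule.bodyVal (r : RedRule α) (I : Interp α) : V4 :=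
  min (if r.fstar then V4.Fs else V4.T) (evalConj I r.pos)

def redSat (I : Interp α) (r : RedRule α) : Prop := r.bodyVal I ≤ I r.head

def redModel (I : Interp α) (Q : Set (RedRule α)) : Prop := ∀ r ∈ Q, redSat I r

/-- Reduct rules generated by a head `C1,…,Cn`: rules `Cj ← F*, body` for
`j < r` and `Cr ← body`, where `r` is the least index with
`I C1 = ⋯ = I C_{r-1} = F*` and (`r = n` or `I Cr ≠ F*`). -/
def xredHead (I : Interp α) (body : List (Lit α)) : List (Lit α) → List (RedRule α)
  | [] => []
  | [c] => [⟨c, body, false⟩]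
  | c :: c' :: rest =>
    if I c = V4.Fs then ⟨c, body, true⟩ :: xredHead I body (c' :: rest)
    else [⟨c, body, false⟩]

/-- The ×-reduct of a rule w.r.t. `I`. -/
def xredRule (I : Interp α) (R : Rule α) : List (RedRule α) :=
  if ∃ b ∈ R.neg, I b = V4.T then [] else xredHead I R.pos R.headList

/-- The ×-reduct of an LPOD w.r.t. `I`. -/
def xreduct (I : Interp α) (P : Set (Rule α)) : Set (RedRule α) :=
  { r | ∃ R ∈ P, r ∈ xredRule I R }

/-- `M` is a three-valued answer set of the LPOD `P`: a consistent three-valued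
interpretation that is the `≤`-least (three-valued) model of `P^M_×`. -/
def threeAnswerSet (P : Set (Rule α)) (M : Interp α) : Prop :=
  solid M ∧ consistentI M ∧ redModel M (xreduct M P) ∧
  ∀ N : Interp α, solid N → redModel N (xreduct M P) → interpLE M N

/-! ### Two-valued notions: Brewka answer sets and GL answer sets -/

/-- A set of literals is consistent if it contains no complementary pair. -/
def twoConsistent (N : Set (Lit α)) : Prop :=
  ∀ a : α, ¬ (Lit.mk a true ∈ N ∧ Lit.mk a false ∈ N)

/-- `N` is a (two-valued) Brewka-model of the LPOD `P`. -/
def brewkaModel (N : Set (Lit α)) (P : Set (Rule α)) : Prop :=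
  ∀ R ∈ P, (∀ a ∈ R.pos, a ∈ N) → (∀ b ∈ R.neg, b ∉ N) → ∃ c ∈ R.headList, c ∈ N

/-- A positive rule `C ← A1,…,Am`. -/
structure PosRule (α : Type) where
  head : Lit α
  pos : List (Lit α)

/-- `N` is a two-valued model of a positive program. -/
def posModel (N : Set (Lit α)) (Q : Set (PosRule α)) : Prop :=
  ∀ r ∈ Q, (∀ a ∈ r.pos, a ∈ N) → r.head ∈ N

/-- The Brewka ×-reduct of an LPOD w.r.t. a set of literals `N`:
`Ci ← A1,…,Am` whenever `Ci ∈ N` and `N ∩ {C1,…,C_{i-1},B1,…,Bk} = ∅`. -/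
def brewkaReduct (N : Set (Lit α)) (P : Set (Rule α)) : Set (PosRule α) :=
  { r | ∃ R ∈ P, ∃ l1 l2 : List (Lit α),
      R.headList = l1 ++ r.head :: l2 ∧ r.pos = R.pos ∧ r.head ∈ N ∧
      (∀ c ∈ l1, c ∉ N) ∧ (∀ b ∈ R.neg, b ∉ N) }

/-- `N` is a Brewka answer set of the LPOD `P`. -/
def brewkaAnswerSet (P : Set (Rule α)) (N : Set (Lit α)) : Prop :=
  twoConsistent N ∧ brewkaModel N P ∧ posModel N (brewkaReduct N P) ∧
  ∀ N', posModel N' (brewkaReduct N P) → N ⊆ N'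

/-- The Gelfond–Lifschitz reduct of an extended logic program (an LPOD all
of whose rule heads are single literals) w.r.t. a set of literals `N`. -/
def glReduct (P : Set (Rule α)) (N : Set (Lit α)) : Set (PosRule α) :=
  { r | ∃ R ∈ P, (∀ b ∈ R.neg, b ∉ N) ∧ r.head = R.c1 ∧ r.pos = R.pos }

/-- `N` is a standard answer set of the extended logic program `P`: a consistent
set of literals that is the least model of `P^N`. -/
def stdAnswerSet (P : Set (Rule α)) (N : Set (Lit α)) : Prop :=
  twoConsistent N ∧ posModel N (glReduct P N) ∧
  ∀ N', posModel N' (glReduct P N) → N ⊆ N'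

/-! ### DLPODs -/

/-- A DLPOD rule `𝒞1 × ⋯ × 𝒞n ← A1,…,Am, not B1,…,not Bk`, where each `𝒞i`
is a disjunction of literals; the head is `c1 :: cs` (nonempty). -/
structure DRule (α : Type) where
  c1 : List (Lit α)
  cs : List (List (Lit α))
  pos : List (Lit α)
  neg : List (Lit α)

def DRule.headList (R : DRule α) : List (List (Lit α)) := R.c1 :: R.cs

def DRule.headVal (R : DRule α) (I : Interp α) : V4 :=
  evalOD (R.headList.map (evalDisj I))

def DRule.bodyVal (R : DRule α) (I : Interp α) : V4 :=
  min (evalConj I R.pos) (evalNegs I R.neg)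

def dRuleSat (I : Interp α) (R : DRule α) : Prop := R.bodyVal I ≤ R.headVal I

def isDModel (I : Interp α) (P : Set (DRule α)) : Prop := ∀ R ∈ P, dRuleSat I R

/-- A disjunctive reduct rule `𝒞 ← [F*,] A1,…,Am`. -/
structure DRedRule (α : Type) where
  head : List (Lit α)
  pos : List (Lit α)
  fstar : Bool

def DRedRule.bodyVal (r : DRedRule α) (I : Interp α) : V4 :=
  min (if r.fstar then V4.Fs else V4.T) (evalConj I r.pos)

def dredSat (I : Interp α) (r : DRedRule α) : Prop := r.bodyVal I ≤ evalDisj I r.head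

def dredModel (I : Interp α) (Q : Set (DRedRule α)) : Prop := ∀ r ∈ Q, dredSat I r

def dxredHead (I : Interp α) (body : List (Lit α)) :
    List (List (Lit α)) → List (DRedRule α)
  | [] => []
  | [c] => [⟨c, body, false⟩]
  | c :: c' :: rest =>
    if evalDisj I c = V4.Fs then ⟨c, body, true⟩ :: dxredHead I body (c' :: rest)
    else [⟨c, body, false⟩]

/-- The ×-reduct of a DLPOD rule w.r.t. `I`. -/
def dxredRule (I : Interp α) (R : DRule α) : List (DRedRule α) :=
  if ∃ b ∈ R.neg, I b = V4.T then [] else dxredHead I R.pos R.headList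

/-- The ×-reduct of a DLPOD w.r.t. `I`. -/
def dxreduct (I : Interp α) (P : Set (DRule α)) : Set (DRedRule α) :=
  { r | ∃ R ∈ P, r ∈ dxredRule I R }

/-- `M` is an answer set of the DLPOD `P`: a consistent three-valued
interpretation that is a `≤`-minimal (three-valued) model of `P^M_×`. -/
def dAnswerSet (P : Set (DRule α)) (M : Interp α) : Prop :=
  solid M ∧ consistentI M ∧ dredModel M (dxreduct M P) ∧
  ∀ N : Interp α, solid N → dredModel N (dxreduct M P) → interpLE N M → N = M

/-- A positive disjunctive rule `C1 ∨ ⋯ ∨ Cq ← A1,…,Am`. -/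
structure DPosRule (α : Type) where
  head : List (Lit α)
  pos : List (Lit α)

/-- `N` is a two-valued model of a positive disjunctive program. -/
def dposModel (N : Set (Lit α)) (Q : Set (DPosRule α)) : Prop :=
  ∀ r ∈ Q, (∀ a ∈ r.pos, a ∈ N) → ∃ c ∈ r.head, c ∈ N

/-- The Gelfond–Lifschitz reduct of a disjunctive extended logic program (a
DLPOD all of whose rule heads are single disjunctions). -/
def glDReduct (P : Set (DRule α)) (N : Set (Lit α)) : Set (DPosRule α) :=
  { r | ∃ R ∈ P, (∀ b ∈ R.neg, b ∉ N) ∧ r.head = R.c1 ∧ r.pos = R.pos }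

/-- `N` is a standard disjunctive answer set: a consistent set of literals that
is a minimal two-valued model of `P^N`. -/
def stdDAnswerSet (P : Set (DRule α)) (N : Set (Lit α)) : Prop :=
  twoConsistent N ∧ dposModel N (glDReduct P N) ∧
  ∀ N', dposModel N' (glDReduct P N) → N' ⊆ N → N' = N

/-!
A three-valued answer set `M` satisfies its own ×-reduct, and for a single interpretation
satisfying the reduct of a rule is the same as satisfying the rule: the reduct keeps exactly the
head literal at which the ordered disjunction takes its value. Conversely, a three-valued
`N ⪯ M` only lowers values of `M` to `F`. If such an `N` is a model of `P`, it is a model of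
`P^M_×`: lowering keeps every `not B` true, and lowering an `F*` of the head that precedes the
selected literal would force the rule body to `F`. Leastness then gives `M ≤ N`, which together
with `N ⪯ M` forces `N = M`.
-/

namespace V4

lemma F_le (a : V4) : F ≤ a := by cases a <;> decide

lemma le_T (a : V4) : a ≤ T := by cases a <;> decide

lemma eq_F_of_le_F {a : V4} (h : a ≤ F) : a = F := le_antisymm h (F_le a)

lemma T_min (a : V4) : min T a = a := min_eq_right (le_T a)

lemma le_Fs_of_ne_Ts_of_ne_T {a : V4} (hTs : a ≠ Ts) (hT : a ≠ T) : a ≤ Fs := by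
  cases a <;> first | decide | simp_all

end V4

lemma evalOD_cons (v : V4) (vs : List V4) :
    evalOD (v :: vs) = if v = V4.Fs then evalOD vs else v := rfl

lemma evalOD_singleton (v : V4) : evalOD [v] = v := by
  by_cases hv : v = V4.Fs <;> simp [evalOD, V4.times, hv]

lemma evalNegs_eq_T {I : Interp α} {L : List (Lit α)} (h : ∀ b ∈ L, I b ≤ V4.Fs) :
    evalNegs I L = V4.T := by
  induction L with
  | nil => rfl
  | cons b L ih =>
    show min (V4.notv (I b)) (evalNegs I L) = V4.T
    rw [V4.notv, if_pos (h b List.mem_cons_self), ih fun c hc => h c (List.mem_cons_of_mem b hc),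
      V4.T_min]

lemma evalNegs_eq_F {I : Interp α} {L : List (Lit α)} {b : Lit α} (hb : b ∈ L)
    (hT : I b = V4.T) : evalNegs I L = V4.F := by
  induction L with
  | nil => simp at hb
  | cons c L ih =>
    show min (V4.notv (I c)) (evalNegs I L) = V4.F
    rcases List.mem_cons.1 hb with rfl | hb
    · rw [V4.notv, hT, if_neg (by decide)]
      exact V4.eq_F_of_le_F (min_le_left _ _)
    · rw [ih hb]
      exact V4.eq_F_of_le_F (min_le_right _ _)

lemma redSat_mk_false_iff {I : Interp α} {c : Lit α} {body : List (Lit α)} :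
    redSat I ⟨c, body, false⟩ ↔ evalConj I body ≤ I c := by
  simp only [redSat, RedRule.bodyVal, Bool.false_eq_true, if_false, V4.T_min]

lemma redSat_mk_true_of_eq_Fs {I : Interp α} {c : Lit α} {body : List (Lit α)}
    (hc : I c = V4.Fs) : redSat I ⟨c, body, true⟩ := by
  simp only [redSat, RedRule.bodyVal, if_true, hc]
  exact min_le_left _ _

lemma redSat_of_evalConj_eq_F {I : Interp α} {r : RedRule α} (h : evalConj I r.pos = V4.F) :
    redSat I r := by
  simp only [redSat, RedRule.bodyVal, h]
  exact (min_le_right _ _).trans (V4.F_le _)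

lemma pos_eq_of_mem_xredHead {I : Interp α} {body : List (Lit α)} :
    ∀ {hs : List (Lit α)} {r : RedRule α}, r ∈ xredHead I body hs → r.pos = body
  | [], _, hr => by simp [xredHead] at hr
  | [_], _, hr => by simp only [xredHead, List.mem_singleton] at hr; rw [hr]
  | c :: c' :: rest, _, hr => by
    rw [xredHead] at hr
    split_ifs at hr
    · rcases List.mem_cons.1 hr with rfl | hr
      · rfl
      · exact pos_eq_of_mem_xredHead hr
    · rw [List.mem_singleton] at hr; rw [hr]

lemma evalConj_le_evalOD_of_redSat_xredHead (I : Interp α) (body : List (Lit α)) :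
    ∀ (c : Lit α) (cs : List (Lit α)), (∀ r ∈ xredHead I body (c :: cs), redSat I r) →
      evalConj I body ≤ evalOD ((c :: cs).map I)
  | c, [], h => by
    rw [List.map_singleton, evalOD_singleton]
    exact redSat_mk_false_iff.1 (h _ (by simp [xredHead]))
  | c, c' :: cs, h => by
    rw [List.map_cons, evalOD_cons]
    by_cases hc : I c = V4.Fs
    · rw [if_pos hc]
      refine evalConj_le_evalOD_of_redSat_xredHead I body c' cs fun r hr => h r ?_
      rw [xredHead, if_pos hc]
      exact List.mem_cons_of_mem _ hr
    · rw [if_neg hc]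
      exact redSat_mk_false_iff.1 (h _ (by simp [xredHead, hc]))

lemma redSat_xredHead_of_le_evalOD {M N : Interp α} {body : List (Lit α)}
    (hNM : ∀ l, N l = M l ∨ N l = V4.F) (hbody : evalConj N body ≠ V4.F) :
    ∀ (c : Lit α) (cs : List (Lit α)), evalConj N body ≤ evalOD ((c :: cs).map N) →
      ∀ r ∈ xredHead M body (c :: cs), redSat N r
  | c, [], hle, r, hr => by
    simp only [xredHead, List.mem_singleton] at hr
    subst hr
    rw [List.map_singleton, evalOD_singleton] at hle
    exact redSat_mk_false_iff.2 hle
  | c, c' :: cs, hle, r, hr => by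
    rw [List.map_cons, evalOD_cons] at hle
    rw [xredHead] at hr
    by_cases hMc : M c = V4.Fs
    · -- `N c = F` would make the ordered disjunction, hence the body, `F`
      have hNc : N c = V4.Fs := by
        rcases hNM c with h | h
        · rw [h, hMc]
        · rw [h, if_neg (by decide)] at hle
          exact absurd (V4.eq_F_of_le_F hle) hbody
      rw [if_pos hMc] at hr
      rw [if_pos hNc] at hle
      rcases List.mem_cons.1 hr with rfl | hr
      · exact redSat_mk_true_of_eq_Fs hNc
      · exact redSat_xredHead_of_le_evalOD hNM hbody c' cs hle r hr
    · have hNc : N c ≠ V4.Fs := by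
        rcases hNM c with h | h <;> rw [h]
        · exact hMc
        · decide
      rw [if_neg hMc, List.mem_singleton] at hr
      subst hr
      rw [if_neg hNc] at hle
      exact redSat_mk_false_iff.2 hle

lemma ruleSat_of_redSat_xredRule {I : Interp α} {R : Rule α}
    (h : ∀ r ∈ xredRule I R, redSat I r) : ruleSat I R := by
  unfold ruleSat Rule.bodyVal Rule.headVal
  by_cases hneg : ∃ b ∈ R.neg, I b = V4.T
  · obtain ⟨b, hb, hbT⟩ := hneg
    rw [evalNegs_eq_F hb hbT]
    exact (min_le_right _ _).trans (V4.F_le _)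
  · rw [xredRule, if_neg hneg] at h
    exact (min_le_left _ _).trans (evalConj_le_evalOD_of_redSat_xredHead I R.pos R.c1 R.cs h)

lemma redSat_xredRule_of_ruleSat {M N : Interp α} {R : Rule α} (hM : solid M)
    (hNM : ∀ l, N l = M l ∨ N l = V4.F) (hN : ruleSat N R) :
    ∀ r ∈ xredRule M R, redSat N r := by
  intro r hr
  rw [xredRule] at hr
  split_ifs at hr with hneg
  · simp at hr
  by_cases hbody : evalConj N R.pos = V4.F
  · exact redSat_of_evalConj_eq_F (by rw [pos_eq_of_mem_xredHead hr, hbody])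
  have hnegs : evalNegs N R.neg = V4.T := by
    refine evalNegs_eq_T fun b hb => ?_
    have hMb : M b ≤ V4.Fs := V4.le_Fs_of_ne_Ts_of_ne_T (hM b) fun hT => hneg ⟨b, hb, hT⟩
    rcases hNM b with h | h <;> rw [h]
    · exact hMb
    · exact V4.F_le _
  have hle : evalConj N R.pos ≤ evalOD (R.headList.map N) := by
    unfold ruleSat Rule.bodyVal Rule.headVal at hN
    rwa [hnegs, min_eq_left (V4.le_T _)] at hN
  exact redSat_xredHead_of_le_evalOD hNM hbody R.c1 R.cs hle r hr

theorem isModel_of_redModel_xreduct {P : Set (Rule α)} {M : Interp α}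
    (h : redModel M (xreduct M P)) : isModel M P :=
  fun R hR => ruleSat_of_redSat_xredRule fun r hr => h r ⟨R, hR, hr⟩

theorem redModel_xreduct_of_isModel {P : Set (Rule α)} {M N : Interp α} (hM : solid M)
    (hNM : ∀ l, N l = M l ∨ N l = V4.F) (hN : isModel N P) : redModel N (xreduct M P) := by
  rintro r ⟨R, hR, hr⟩
  exact redSat_xredRule_of_ruleSat hM hNM (hN R hR) r hr

lemma eq_or_eq_F_of_interpPreceq {M N : Interp α} (hN : solid N) (h : interpPreceq N M) :
    ∀ l, N l = M l ∨ N l = V4.F := by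
  intro l
  rcases h l with h | ⟨h, -⟩ | ⟨h, -⟩
  · exact Or.inl h
  · exact Or.inr h
  · exact absurd h (hN l)

/-- Every three-valued answer set of an LPOD `P` is a
`⪯`-minimal three-valued model of `P`. -/
theorem threeAnswerSet_preceq_minimal {α : Type} (P : Set (Rule α)) (M : Interp α)
    (h : threeAnswerSet P M) :
    isModel M P ∧
      ∀ N : Interp α, solid N → isModel N P → interpPreceq N M → N = M := by
  obtain ⟨hM, -, hMred, hleast⟩ := h
  refine ⟨isModel_of_redModel_xreduct hMred, fun N hN hNP hNM => ?_⟩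
  have hlower := eq_or_eq_F_of_interpPreceq hN hNM
  have hMN : interpLE M N := hleast N hN (redModel_xreduct_of_isModel hM hlower hNP)
  funext l
  rcases hlower l with h | h
  · exact h
  · have hMl : M l ≤ V4.F := h ▸ hMN l
    rw [h, V4.eq_F_of_le_F hMl]
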